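/- Let C be a finite set of n ≥ 2 candidates equipped with a complete top-truncated order ≿ in which at least one candidate is ranked. Then C contains exactly n − 1 meet-irreducible elements, where x is meet-irreducible if there is exactly one y ∈ C that covers x. -/
import Mathlib

/-- In a finite nonempty set, a total transitive reflexive relation has a minimum. -/
theorem exists_rel_min {C : Type*} (rel : C → C → Prop)
    (hrefl : ∀ x, rel x x)
    (htrans : ∀ x y z, rel x y → rel y z → rel x z)
    (htotal : ∀ x y, rel x y ∨ rel y x)
    (s : Finset C) (hs : s.Nonempty) : ∃ y ∈ s, ∀ z ∈ s, rel y z := by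
  classical
  induction hs using Finset.Nonempty.cons_induction with
  | singleton a =>
    exact ⟨a, Finset.mem_singleton_self a, fun z hz => by
      rw [Finset.mem_singleton] at hz; rw [hz]; exact hrefl a⟩
  | cons a s ha hs ih =>
    obtain ⟨y, hy, hmin⟩ := ih
    rcases htotal a y with h1 | h1
    · refine ⟨a, Finset.mem_cons_self a _, fun z hz => ?_⟩
      rcases Finset.mem_cons.mp hz with rfl | hz
      · exact hrefl _
      · exact htrans a y z h1 (hmin z hz)
    · refine ⟨y, Finset.mem_cons_of_mem hy, fun z hz => ?_⟩
      rcases Finset.mem_cons.mp hz with rfl | hz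
      · exact h1
      · exact hmin z hz

/-- A ranked-choice ballot with `n ≥ 2` candidates contains exactly `n - 1`
meet-irreducible elements (elements covered by exactly one element). -/
theorem rankedChoiceBallot_meetIrreducible_count
    {C : Type*} [Fintype C] (hcard : 2 ≤ Fintype.card C)
    (r : C → C → Prop)
    (hrefl : ∀ x, r x x)
    (htrans : ∀ x y z, r x y → r y z → r x z)
    (htotal : ∀ x y, r x y ∨ r y x)
    -- top-truncated: distinct indistinguishable candidates are minimal
    (htt : ∀ x y, x ≠ y → r x y → r y x → ∀ z, r z x ∧ r z y)
    -- at least one candidate is ranked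
    (hranked : ∃ x, ∀ y, r x y → r y x → y = x) :
    {x : C | ∃! y : C,
        -- y covers x: y ≻ x and no z strictly between
        ((r y x ∧ ¬ r x y) ∧
          ¬ ∃ z : C, (r y z ∧ ¬ r z y) ∧ (r z x ∧ ¬ r x z))}.ncard
      = Fintype.card C - 1 := by
  classical
  -- get a maximum m : ∀ z, r m z
  have hne : Nonempty C := Fintype.card_pos_iff.mp (by omega)
  obtain ⟨m, -, hm⟩ := exists_rel_min r hrefl htrans htotal
    Finset.univ (Finset.univ_nonempty_iff.mpr hne)
  have hm' : ∀ z, r m z := fun z => hm z (Finset.mem_univ z)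
  -- m is strictly above every other element
  have hstrict : ∀ y, y ≠ m → ¬ r y m := by
    intro y hy hrym
    have hall := htt y m hy hrym (hm' y)
    -- everything is equivalent to m
    have hequiv : ∀ z w : C, r z w := by
      intro z w
      exact htrans z m w (hall z).2 (hm' w)
    obtain ⟨x, hx⟩ := hranked
    have : ∀ w : C, w = x := fun w => hx w (hequiv x w) (hequiv w x)
    have h1 : Fintype.card C ≤ 1 := Fintype.card_le_one_iff.mpr
      (fun a b => (this a).trans (this b).symm)
    omega
  -- the meet-irreducible set is exactly {m}ᶜ
  have hset : {x : C | ∃! y : C,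
        ((r y x ∧ ¬ r x y) ∧
          ¬ ∃ z : C, (r y z ∧ ¬ r z y) ∧ (r z x ∧ ¬ r x z))} = {m}ᶜ := by
    ext x
    simp only [Set.mem_setOf_eq, Set.mem_compl_iff, Set.mem_singleton_iff]
    constructor
    · rintro ⟨y, ⟨⟨hyx, hxy⟩, -⟩, -⟩ rfl
      exact hxy (hm' y)
    · intro hx
      -- S = elements strictly above x
      set S := Finset.univ.filter (fun y => r y x ∧ ¬ r x y) with hS
      have hmS : m ∈ S := by
        simp only [hS, Finset.mem_filter, Finset.mem_univ, true_and]
        exact ⟨hm' x, hstrict x hx⟩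
      obtain ⟨y, hyS, hymin⟩ := exists_rel_min (fun a b => r b a) hrefl
        (fun x y z h1 h2 => htrans z y x h2 h1) (fun x y => htotal y x) S ⟨m, hmS⟩
      simp only [hS, Finset.mem_filter, Finset.mem_univ, true_and] at hyS
      refine ⟨y, ⟨hyS, ?_⟩, ?_⟩
      · rintro ⟨z, ⟨hyz, hzy⟩, hzx, hxz⟩
        have hzS : z ∈ S := by
          simp only [hS, Finset.mem_filter, Finset.mem_univ, true_and]
          exact ⟨hzx, hxz⟩
        exact hzy (hymin z hzS)
      · rintro y' ⟨⟨hy'x, hxy'⟩, hnb'⟩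
        by_contra hne
        -- y and y' both cover x
        have hyS' : (r y x ∧ ¬ r x y) ∧
            ¬ ∃ z : C, (r y z ∧ ¬ r z y) ∧ (r z x ∧ ¬ r x z) := by
          refine ⟨hyS, ?_⟩
          rintro ⟨z, ⟨hyz, hzy⟩, hzx, hxz⟩
          have hzS : z ∈ S := by
            simp only [hS, Finset.mem_filter, Finset.mem_univ, true_and]
            exact ⟨hzx, hxz⟩
          exact hzy (hymin z hzS)
        have key : r y y' ∧ r y' y := by
          rcases htotal y y' with h1 | h1
          · constructor
            · exact h1
            · by_contra h2
              exact hyS'.2 ⟨y', ⟨h1, h2⟩, hy'x, hxy'⟩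
          · constructor
            · by_contra h2
              exact hnb' ⟨y, ⟨h1, h2⟩, hyS.1, hyS.2⟩
            · exact h1
        have := htt y' y hne key.2 key.1
        exact hxy' (this x).1
  rw [hset]
  have : ({m}ᶜ : Set C).ncard = Fintype.card C - 1 := by
    rw [Set.ncard_eq_toFinset_card']
    simp [Finset.card_compl]
  exact this
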